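/- Let A ⊆ B(X) be an abelian, unital, semisimple, norm-closed subalgebra of split strict multiplicity 2, and L ⊆ A a norm-closed subspace. If T ∈ B(X) satisfies Tx ∈ closure(Lx) for all x ∈ X, then there exists l₀ ∈ L with (T − T_{l₀})(x) ∈ R₁ ⊕ R₂ for every x ∈ X. -/

import Mathlib

set_option synthInstance.maxHeartbeats 1000000
set_option maxHeartbeats 1000000

/-- The annihilator ideal `Iⱼ = {a ∈ A : a xⱼ = 0}` of a vector. -/
def annIdeal {X : Type*} [NormedAddCommGroup X] [NormedSpace ℂ X]
    (A : Subalgebra ℂ (X →L[ℂ] X)) (x : X) : Ideal ↥A where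
  carrier := {a | (a : X →L[ℂ] X) x = 0}
  add_mem' := fun {a b} ha hb => by
    simp only [Set.mem_setOf_eq] at *
    rw [Subalgebra.coe_add, ContinuousLinearMap.add_apply, ha, hb, add_zero]
  zero_mem' := by simp
  smul_mem' := fun c a ha => by
    simp only [Set.mem_setOf_eq, smul_eq_mul] at *
    rw [Subalgebra.coe_mul, ContinuousLinearMap.mul_apply, ha, map_zero]

/-- `c ∈ A` maps into the radical of `A/I`, i.e. `c` lies in every maximal ideal
of `A` containing the annihilator ideal of `x`. -/
def inRadical {X : Type*} [NormedAddCommGroup X] [NormedSpace ℂ X]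
    (A : Subalgebra ℂ (X →L[ℂ] X)) (x : X) (c : ↥A) : Prop :=
  ∀ M : Ideal ↥A, M.IsMaximal → annIdeal A x ≤ M → c ∈ M

/-!
Open mapping for `(a, b) ↦ a x₁ + b x₂`, commutativity of `A` and the boundedness of the
projections of `X = A x₁ ⊕ A x₂` give `‖l‖ ≤ K ‖l (x₁ + x₂)‖` on `A`. Hence
`{l (x₁ + x₂) | l ∈ L}` is closed, so `T (x₁ + x₂) = l₀ (x₁ + x₂)` for some `l₀ ∈ L`, and this
splits into `T xⱼ = l₀ xⱼ` because `T` leaves the closed orbits invariant.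

For a maximal ideal `M ⊇ Iⱼ` the set `M xⱼ` is closed (the orbit map `A → A xⱼ` is open and `M`
is a union of its fibres), so `T` maps it into itself. Writing `a = μ + m` with `m ∈ M`
(Gelfand–Mazur) gives `T (a xⱼ) ∈ (l₀ a + M) xⱼ`, i.e. the `xⱼ`-coordinate of `(T - l₀) y` lies
in every such `M`.
-/

theorem Ideal.IsMaximal.exists_sub_algebraMap_mem {R : Type*} [NormedCommRing R]
    [NormedAlgebra ℂ R] [CompleteSpace R] {M : Ideal R} (hM : M.IsMaximal) (a : R) :
    ∃ μ : ℂ, a - algebraMap ℂ R μ ∈ M := by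
  let φ : R →ₐ[ℂ] ℂ := WeakDual.CharacterSpace.equivAlgHom M.toCharacterSpace
  have hker : M = RingHom.ker φ :=
    hM.eq_of_le (RingHom.ker_ne_top φ) fun b hb => M.toCharacterSpace_apply_eq_zero_of_mem hb
  refine ⟨φ a, ?_⟩
  rw [hker, RingHom.mem_ker, map_sub, AlgHom.commutes, Algebra.algebraMap_self_apply, sub_self]

section Normed

variable {𝕜 E : Type*} [NontriviallyNormedField 𝕜] [NormedAddCommGroup E] [NormedSpace 𝕜 E]
  [CompleteSpace E]

theorem Submodule.exists_norm_add_norm_le_of_isCompl {p q : Submodule 𝕜 E} (h : IsCompl p q)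
    (hp : IsClosed (p : Set E)) (hq : IsClosed (q : Set E)) :
    ∃ C, ∀ u ∈ p, ∀ v ∈ q, ‖u‖ + ‖v‖ ≤ C * ‖u + v‖ := by
  let e := Submodule.prodEquivOfIsTopCompl p q (Submodule.IsCompl.isTopCompl_of_isClosed h hp hq)
  refine ⟨2 * ‖(e.symm : E →L[𝕜] p × q)‖, fun u hu v hv => ?_⟩
  have he : e.symm (u + v) = (⟨u, hu⟩, ⟨v, hv⟩) := e.symm_apply_eq.mpr rfl
  have hnorm := (e.symm : E →L[𝕜] p × q).le_opNorm (u + v)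
  rw [ContinuousLinearEquiv.coe_coe, he] at hnorm
  have hu' := norm_fst_le ((⟨u, hu⟩, ⟨v, hv⟩) : p × q)
  have hv' := norm_snd_le ((⟨u, hu⟩, ⟨v, hv⟩) : p × q)
  simp only [Submodule.coe_norm] at hu' hv'
  linarith

theorem ContinuousLinearMap.isClosed_image_of_norm_le_mul_norm {F : Type*} [NormedAddCommGroup F]
    [NormedSpace 𝕜 F] {L : Submodule 𝕜 E} (hL : IsClosed (L : Set E)) (f : E →L[𝕜] F) {K : ℝ}
    (hK : ∀ l ∈ L, ‖l‖ ≤ K * ‖f l‖) : IsClosed (f '' L) := by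
  have := hL.completeSpace_coe
  let g := f.comp L.subtypeL
  have hg : AntilipschitzWith (Real.toNNReal K) g := by
    refine g.antilipschitz_of_bound fun l => (hK l l.2).trans ?_
    gcongr
    · exact Real.le_coe_toNNReal K
    · rfl
  convert hg.isClosed_range g.uniformContinuous using 1
  ext
  simp [g]

end Normed

namespace Subalgebra

variable {X : Type*} [NormedAddCommGroup X] [NormedSpace ℂ X]

noncomputable def evalAt (A : Subalgebra ℂ (X →L[ℂ] X)) (x : X) : A →L[ℂ] X :=
  (ContinuousLinearMap.apply ℂ X x).comp (Subalgebra.toSubmodule A).subtypeL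

@[simp]
theorem evalAt_apply (A : Subalgebra ℂ (X →L[ℂ] X)) (x : X) (a : A) :
    A.evalAt x a = (a : X →L[ℂ] X) x :=
  rfl

noncomputable def orbit (A : Subalgebra ℂ (X →L[ℂ] X)) (x : X) : Submodule ℂ X :=
  LinearMap.range (A.evalAt x : A →ₗ[ℂ] X)

theorem coe_orbit (A : Subalgebra ℂ (X →L[ℂ] X)) (x : X) :
    (A.orbit x : Set X) = {y | ∃ a ∈ A, a x = y} := by
  ext y
  simp [orbit]

variable {A : Subalgebra ℂ (X →L[ℂ] X)} {L : Submodule ℂ (X →L[ℂ] X)} {T : X →L[ℂ] X}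

theorem isCompl_orbit {x₁ x₂ : X} (hspan : ∀ y : X, ∃ a ∈ A, ∃ b ∈ A, y = a x₁ + b x₂)
    (hind : ∀ a ∈ A, ∀ b ∈ A, a x₁ + b x₂ = 0 → a x₁ = 0 ∧ b x₂ = 0) :
    IsCompl (A.orbit x₁) (A.orbit x₂) := by
  constructor
  · rw [Submodule.disjoint_def]
    rintro _ ⟨a, rfl⟩ ⟨b, hb⟩
    refine (hind a a.2 (-b) (neg_mem b.2) ?_).1
    simpa [← sub_eq_add_neg, sub_eq_zero] using hb.symm
  · rw [codisjoint_iff, eq_top_iff]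
    rintro y -
    obtain ⟨a, ha, b, hb, rfl⟩ := hspan y
    exact Submodule.add_mem_sup ⟨⟨a, ha⟩, rfl⟩ ⟨⟨b, hb⟩, rfl⟩

theorem apply_mem_evalAt_image (hLA : (L : Set (X →L[ℂ] X)) ⊆ A)
    (hT : ∀ y : X, T y ∈ closure {z : X | ∃ l ∈ L, l y = z}) {x : X} {M : Ideal A}
    (hM : IsClosed (A.evalAt x '' M)) {m : A} (hm : m ∈ M) :
    T ((m : X →L[ℂ] X) x) ∈ A.evalAt x '' M :=
  closure_minimal (by rintro _ ⟨l, hl, rfl⟩; exact ⟨⟨l, hLA hl⟩ * m, M.mul_mem_left _ hm, rfl⟩)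
    hM (hT _)

theorem apply_mem_orbit (hLA : (L : Set (X →L[ℂ] X)) ⊆ A)
    (hT : ∀ y : X, T y ∈ closure {z : X | ∃ l ∈ L, l y = z}) {x : X}
    (hx : IsClosed (A.orbit x : Set X)) (a : A) : T ((a : X →L[ℂ] X) x) ∈ A.orbit x :=
  closure_minimal (by rintro _ ⟨l, hl, rfl⟩; exact ⟨⟨l, hLA hl⟩ * a, rfl⟩) hx (hT _)

theorem apply_eq_of_apply_add_eq (hLA : (L : Set (X →L[ℂ] X)) ⊆ A)
    (hT : ∀ y : X, T y ∈ closure {z : X | ∃ l ∈ L, l y = z}) {x₁ x₂ : X}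
    (h₁ : IsClosed (A.orbit x₁ : Set X)) (h₂ : IsClosed (A.orbit x₂ : Set X))
    (hdisj : Disjoint (A.orbit x₁) (A.orbit x₂)) {l₀ : A}
    (h : T (x₁ + x₂) = (l₀ : X →L[ℂ] X) (x₁ + x₂)) :
    T x₁ = (l₀ : X →L[ℂ] X) x₁ ∧ T x₂ = (l₀ : X →L[ℂ] X) x₂ := by
  have hu : T x₁ - (l₀ : X →L[ℂ] X) x₁ ∈ A.orbit x₁ :=
    sub_mem (by simpa using apply_mem_orbit hLA hT h₁ 1) ⟨l₀, rfl⟩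
  have hv : T x₂ - (l₀ : X →L[ℂ] X) x₂ ∈ A.orbit x₂ :=
    sub_mem (by simpa using apply_mem_orbit hLA hT h₂ 1) ⟨l₀, rfl⟩
  have hsum : (T x₁ - (l₀ : X →L[ℂ] X) x₁) + (T x₂ - (l₀ : X →L[ℂ] X) x₂) = 0 := by
    rw [sub_add_sub_comm, ← map_add, ← map_add, h, sub_self]
  have h0 : T x₁ - (l₀ : X →L[ℂ] X) x₁ = 0 :=
    Submodule.disjoint_def.mp hdisj _ hu
      (by rw [eq_neg_of_add_eq_zero_left hsum]; exact neg_mem hv)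
  rw [h0, zero_add] at hsum
  exact ⟨sub_eq_zero.mp h0, sub_eq_zero.mp hsum⟩

variable [CompleteSpace X] [CompleteSpace A]

theorem exists_norm_le_of_orbit_sup_eq_top (hcomm : ∀ a ∈ A, ∀ b ∈ A, a * b = b * a)
    {x₁ x₂ : X} (hsup : A.orbit x₁ ⊔ A.orbit x₂ = ⊤) :
    ∃ C, 0 ≤ C ∧ ∀ l ∈ A, ‖l‖ ≤ C * (‖l x₁‖ + ‖l x₂‖) := by
  let Φ := (A.evalAt x₁).coprod (A.evalAt x₂)
  have hΦ : Function.Surjective Φ := by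
    intro y
    obtain ⟨_, ⟨a, rfl⟩, _, ⟨b, rfl⟩, hy⟩ :=
      Submodule.mem_sup.mp (hsup ▸ Submodule.mem_top : y ∈ A.orbit x₁ ⊔ A.orbit x₂)
    exact ⟨(a, b), hy⟩
  obtain ⟨C, hC, hpre⟩ := Φ.exists_preimage_norm_le hΦ
  refine ⟨C, hC.le, fun l hl => ContinuousLinearMap.opNorm_le_bound _ (by positivity) fun z => ?_⟩
  obtain ⟨⟨a, b⟩, rfl, hab⟩ := hpre z
  have hΦl : l (Φ (a, b)) = (a : X →L[ℂ] X) (l x₁) + (b : X →L[ℂ] X) (l x₂) := by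
    simp only [Φ, ContinuousLinearMap.coprod_apply, evalAt_apply, map_add]
    rw [← mul_apply_eq_comp, hcomm l hl a a.2, ← mul_apply_eq_comp, hcomm l hl b b.2]
    rfl
  calc ‖l (Φ (a, b))‖ ≤ ‖a‖ * ‖l x₁‖ + ‖b‖ * ‖l x₂‖ := by
        rw [hΦl]
        exact (norm_add_le _ _).trans
          (add_le_add (ContinuousLinearMap.le_opNorm _ _) (ContinuousLinearMap.le_opNorm _ _))
    _ ≤ C * ‖Φ (a, b)‖ * ‖l x₁‖ + C * ‖Φ (a, b)‖ * ‖l x₂‖ := by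
        gcongr
        exacts [(norm_fst_le _).trans hab, (norm_snd_le _).trans hab]
    _ = C * (‖l x₁‖ + ‖l x₂‖) * ‖Φ (a, b)‖ := by ring

theorem exists_norm_le_mul_norm_apply_add (hcomm : ∀ a ∈ A, ∀ b ∈ A, a * b = b * a)
    {x₁ x₂ : X} (hcompl : IsCompl (A.orbit x₁) (A.orbit x₂))
    (h₁ : IsClosed (A.orbit x₁ : Set X)) (h₂ : IsClosed (A.orbit x₂ : Set X)) :
    ∃ K, ∀ l ∈ A, ‖l‖ ≤ K * ‖l (x₁ + x₂)‖ := by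
  obtain ⟨C₀, hC₀, hbound⟩ := exists_norm_le_of_orbit_sup_eq_top hcomm hcompl.sup_eq_top
  obtain ⟨C₁, hproj⟩ := Submodule.exists_norm_add_norm_le_of_isCompl hcompl h₁ h₂
  refine ⟨C₀ * C₁, fun l hl => ?_⟩
  calc ‖l‖ ≤ C₀ * (‖l x₁‖ + ‖l x₂‖) := hbound l hl
    _ ≤ C₀ * (C₁ * ‖l x₁ + l x₂‖) := by
        gcongr
        exact hproj _ ⟨⟨l, hl⟩, rfl⟩ _ ⟨⟨l, hl⟩, rfl⟩
    _ = C₀ * C₁ * ‖l (x₁ + x₂)‖ := by rw [map_add, mul_assoc]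

theorem isClosed_evalAt_image {x : X} (hx : IsClosed (A.orbit x : Set X)) {M : Ideal A}
    (hM : IsClosed (M : Set A)) (hle : annIdeal A x ≤ M) : IsClosed (A.evalAt x '' M) := by
  have := hx.completeSpace_coe
  let q := (A.evalAt x).codRestrict (A.orbit x) fun a => LinearMap.mem_range_self _ a
  have hq : Function.Surjective q := by
    rintro ⟨_, a, rfl⟩
    exact ⟨a, rfl⟩
  have hsat : q ⁻¹' (q '' M) = M := by
    refine Set.Subset.antisymm ?_ (Set.subset_preimage_image q M)
    rintro a ⟨m, hm, hma⟩
    have hmx : (m : X →L[ℂ] X) x = (a : X →L[ℂ] X) x := congrArg Subtype.val hma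
    have hdiff : a - m ∈ annIdeal A x := by
      show ((a - m : A) : X →L[ℂ] X) x = 0
      simp [hmx]
    simpa using M.add_mem (hle hdiff) hm
  have hqM : IsClosed (q '' M) := (q.isQuotientMap hq).isClosed_preimage.mp (by rwa [hsat])
  have himage : A.evalAt x '' M = Subtype.val '' (q '' M) := by
    rw [Set.image_image]
    rfl
  rw [himage]
  exact hx.isClosedEmbedding_subtypeVal.isClosedMap _ hqM

theorem exists_mem_apply_eq_mul_add (hcomm : ∀ a ∈ A, ∀ b ∈ A, a * b = b * a)
    (hLA : (L : Set (X →L[ℂ] X)) ⊆ A) (hT : ∀ y : X, T y ∈ closure {z : X | ∃ l ∈ L, l y = z})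
    {x : X} (hx : IsClosed (A.orbit x : Set X)) {l₀ : A} (hl₀ : T x = (l₀ : X →L[ℂ] X) x)
    {M : Ideal A} (hM : M.IsMaximal) (hle : annIdeal A x ≤ M) (a : A) :
    ∃ d ∈ M, T ((a : X →L[ℂ] X) x) = ((l₀ * a + d : A) : X →L[ℂ] X) x := by
  let _ : NormedCommRing A :=
    { (inferInstance : NormedRing A) with mul_comm := fun a b => Subtype.ext (hcomm a a.2 b b.2) }
  obtain ⟨μ, hμ⟩ := hM.exists_sub_algebraMap_mem a
  have hMc : IsClosed (M : Set A) := by have := hM; exact Ideal.IsMaximal.isClosed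
  obtain ⟨d, hd, hdx⟩ := apply_mem_evalAt_image hLA hT (isClosed_evalAt_image hx hMc hle) hμ
  set m := a - algebraMap ℂ A μ
  refine ⟨d - l₀ * m, M.sub_mem hd (M.mul_mem_left _ hμ), ?_⟩
  have hring : l₀ * a + (d - l₀ * m) = d + μ • l₀ := by
    rw [mul_sub, Algebra.algebraMap_eq_smul_one, mul_smul_comm, mul_one]
    abel
  have hax : (a : X →L[ℂ] X) x = (m : X →L[ℂ] X) x + μ • x := by
    simp [m, Algebra.algebraMap_eq_smul_one]
  rw [hring, hax, map_add, map_smul, hl₀, ← hdx]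
  rfl

theorem sub_mul_mem_of_apply_add_eq (hcomm : ∀ a ∈ A, ∀ b ∈ A, a * b = b * a)
    (hLA : (L : Set (X →L[ℂ] X)) ⊆ A) (hT : ∀ y : X, T y ∈ closure {z : X | ∃ l ∈ L, l y = z})
    {x x' : X} (hx : IsClosed (A.orbit x : Set X)) (hx' : IsClosed (A.orbit x' : Set X))
    (hdisj : Disjoint (A.orbit x) (A.orbit x')) {l₀ : A} (hl₀ : T x = (l₀ : X →L[ℂ] X) x)
    {a b a₁ b₁ : A} (hTy : T ((a : X →L[ℂ] X) x + (b : X →L[ℂ] X) x') =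
      (a₁ : X →L[ℂ] X) x + (b₁ : X →L[ℂ] X) x')
    {M : Ideal A} (hM : M.IsMaximal) (hle : annIdeal A x ≤ M) : a₁ - l₀ * a ∈ M := by
  obtain ⟨d, hd, hTa⟩ := exists_mem_apply_eq_mul_add hcomm hLA hT hx hl₀ hM hle a
  obtain ⟨g, hg⟩ := apply_mem_orbit hLA hT hx' b
  have hann : a₁ - (l₀ * a + d) ∈ annIdeal A x := by
    refine Submodule.disjoint_def.mp hdisj _ ⟨a₁ - (l₀ * a + d), rfl⟩ ⟨g - b₁, ?_⟩
    simp only [map_sub, AddSubgroupClass.coe_sub, sub_apply]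
    rw [sub_eq_sub_iff_add_eq_add, hg, ← hTa, add_comm, ← map_add]
    exact hTy
  have hmem := M.add_mem (hle hann) hd
  rwa [sub_add_eq_sub_sub, sub_add_cancel] at hmem

end Subalgebra

theorem stmt14_general {X : Type*} [NormedAddCommGroup X] [NormedSpace ℂ X] [CompleteSpace X]
    (A : Subalgebra ℂ (X →L[ℂ] X))
    (hA : IsClosed (A : Set (X →L[ℂ] X)))
    (hcomm : ∀ a ∈ A, ∀ b ∈ A, a * b = b * a)
    (x₁ x₂ : X)
    (hc1 : IsClosed {y : X | ∃ a ∈ A, a x₁ = y})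
    (hc2 : IsClosed {y : X | ∃ a ∈ A, a x₂ = y})
    (hspan : ∀ y : X, ∃ a ∈ A, ∃ b ∈ A, y = a x₁ + b x₂)
    (hind : ∀ a ∈ A, ∀ b ∈ A, a x₁ + b x₂ = 0 → a x₁ = 0 ∧ b x₂ = 0)
    (L : Submodule ℂ (X →L[ℂ] X))
    (hLA : (L : Set (X →L[ℂ] X)) ⊆ (A : Set (X →L[ℂ] X)))
    (hLclosed : IsClosed (L : Set (X →L[ℂ] X)))
    (T : X →L[ℂ] X)
    (hT : ∀ y : X, T y ∈ closure {z : X | ∃ l ∈ L, l y = z}) :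
    ∃ l₀ ∈ L, ∀ y : X, ∃ c₁ c₂ : ↥A,
      inRadical A x₁ c₁ ∧ inRadical A x₂ c₂ ∧
      T y - l₀ y = ((c₁ : X →L[ℂ] X)) x₁ + ((c₂ : X →L[ℂ] X)) x₂ := by
  have : CompleteSpace A := hA.completeSpace_coe
  rw [← Subalgebra.coe_orbit] at hc1 hc2
  have hcompl := Subalgebra.isCompl_orbit hspan hind
  obtain ⟨K, hK⟩ := Subalgebra.exists_norm_le_mul_norm_apply_add hcomm hcompl hc1 hc2
  have hclosed : IsClosed (ContinuousLinearMap.apply ℂ X (x₁ + x₂) '' L) :=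
    ContinuousLinearMap.isClosed_image_of_norm_le_mul_norm hLclosed _ fun l hl => hK l (hLA hl)
  obtain ⟨l₀, hl₀L, hl₀⟩ := hclosed.closure_subset (hT (x₁ + x₂))
  set l₀' : A := ⟨l₀, hLA hl₀L⟩
  obtain ⟨hTx₁, hTx₂⟩ :=
    Subalgebra.apply_eq_of_apply_add_eq (l₀ := l₀') hLA hT hc1 hc2 hcompl.disjoint hl₀.symm
  refine ⟨l₀, hl₀L, fun y => ?_⟩
  obtain ⟨a, ha, b, hb, rfl⟩ := hspan y
  obtain ⟨a₁, ha₁, b₁, hb₁, hTy⟩ := hspan (T (a x₁ + b x₂))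
  lift a to A using ha
  lift b to A using hb
  lift a₁ to A using ha₁
  lift b₁ to A using hb₁
  refine ⟨a₁ - l₀' * a, b₁ - l₀' * b, fun M hM hle => ?_, fun M hM hle => ?_, ?_⟩
  · exact Subalgebra.sub_mul_mem_of_apply_add_eq hcomm hLA hT hc1 hc2 hcompl.disjoint hTx₁ hTy
      hM hle
  · rw [add_comm, add_comm ((a₁ : X →L[ℂ] X) x₁)] at hTy
    exact Subalgebra.sub_mul_mem_of_apply_add_eq hcomm hLA hT hc2 hc1 hcompl.disjoint.symm hTx₂
      hTy hM hle
  · simp only [hTy, map_add, AddSubgroupClass.coe_sub, Subalgebra.coe_mul,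
      sub_apply, mul_apply_eq_comp]
    abel

/-- Let `A ⊆ B(X)` be abelian, unital, semisimple, norm-closed, of split strict
multiplicity `2`, and `L ⊆ A` a norm-closed subspace. If `T x ∈ closure (L x)`
for all `x`, then there is `l₀ ∈ L` with `(T - T_{l₀}) x ∈ R₁ ⊕ R₂` for all `x`. -/
theorem stmt14 {X : Type*} [NormedAddCommGroup X] [NormedSpace ℂ X] [CompleteSpace X]
    (A : Subalgebra ℂ (X →L[ℂ] X))
    (hA : IsClosed (A : Set (X →L[ℂ] X)))
    (hcomm : ∀ a ∈ A, ∀ b ∈ A, a * b = b * a)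
    (hsemisimple : ∀ c : ↥A, (∀ M : Ideal ↥A, M.IsMaximal → c ∈ M) → c = 0)
    (x₁ x₂ : X)
    (hc1 : IsClosed {y : X | ∃ a ∈ A, a x₁ = y})
    (hc2 : IsClosed {y : X | ∃ a ∈ A, a x₂ = y})
    (hspan : ∀ y : X, ∃ a ∈ A, ∃ b ∈ A, y = a x₁ + b x₂)
    (hind : ∀ a ∈ A, ∀ b ∈ A, a x₁ + b x₂ = 0 → a x₁ = 0 ∧ b x₂ = 0)
    (L : Submodule ℂ (X →L[ℂ] X))
    (hLA : (L : Set (X →L[ℂ] X)) ⊆ (A : Set (X →L[ℂ] X)))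
    (hLclosed : IsClosed (L : Set (X →L[ℂ] X)))
    (T : X →L[ℂ] X)
    (hT : ∀ y : X, T y ∈ closure {z : X | ∃ l ∈ L, l y = z}) :
    ∃ l₀ ∈ L, ∀ y : X, ∃ c₁ c₂ : ↥A,
      inRadical A x₁ c₁ ∧ inRadical A x₂ c₂ ∧
      T y - l₀ y = ((c₁ : X →L[ℂ] X)) x₁ + ((c₂ : X →L[ℂ] X)) x₂ :=
  stmt14_general A hA hcomm x₁ x₂ hc1 hc2 hspan hind L hLA hLclosed T hT
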